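/- arXiv:2005.09528 — 3 statements merged into one kernel-verified Lean document; each statement's English description precedes it below -/
import Mathlib

section
/- For every σ ∈ (0,1) there exists δ₀ > 0 such that for every symmetric P ∈ ℝ^{n×n} with ‖P − P*‖_F < δ₀: the matrix 𝒜(P) = A − B R⁻¹ Bᵀ P is Hurwitz, and the unique symmetric solution P' of the Lyapunov equation 𝒜(P)ᵀP' + P'𝒜(P) = −(Q + P B R⁻¹ Bᵀ P) satisfies ‖P' − P*‖_F ≤ σ‖P − P*‖_F. -/
open Matrix MeasureTheory Filter NormedSpace
open scoped Kronecker

noncomputable section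

/-- A real square matrix is Hurwitz if every eigenvalue over `ℂ` has negative real part. -/
def IsHurwitz {n : Type*} [Fintype n] [DecidableEq n] (X : Matrix n n ℝ) : Prop :=
  ∀ μ ∈ spectrum ℂ (X.map (algebraMap ℝ ℂ)), μ.re < 0

/-- The Frobenius norm of a real matrix. -/
def frobNorm {p q : Type*} [Fintype p] [Fintype q] (X : Matrix p q ℝ) : ℝ :=
  Real.sqrt (∑ i, ∑ j, (X i j) ^ 2)

/-- The spectral (ℓ²-operator) norm of a real matrix. -/
def spec2Norm {p q : Type*} [Fintype p] [Fintype q] [DecidableEq q] (X : Matrix p q ℝ) : ℝ :=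
  ‖LinearMap.toContinuousLinearMap (Matrix.toEuclideanLin X)‖

/-!
Write `K = B R⁻¹ Bᵀ`, `Δ = P - P*`, `Δ' = P' - P*` and `𝓛 E = 𝒜(P*)ᵀ E + E 𝒜(P*)`. Subtracting the
Riccati equation from the Lyapunov equation for `P'` gives `𝓛 Δ' = Δ K Δ' + Δ' K Δ - Δ K Δ`.
Because `𝒜(P*)` is Hurwitz, `𝒜(P*)ᵀ` and `-𝒜(P*)` have disjoint spectra, so the Sylvester equation
`𝓛 E = 0` only has the solution `E = 0`; hence `𝓛` has a bounded inverse and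
`‖Δ'‖ ≤ c ‖K‖ (‖Δ‖² + 2 ‖Δ‖ ‖Δ'‖)`, which forces `‖Δ'‖ ≤ σ ‖Δ‖` once `‖Δ‖` is small.
That `𝒜(P)` stays Hurwitz near `P*` is the upper hemicontinuity of the spectrum.
-/

namespace Matrix

variable {K : Type*} [Field K] {m n : Type*} [Fintype m] [DecidableEq m] [Fintype n] [DecidableEq n]

open Polynomial in
theorem aeval_mul_eq_mul_aeval_of_mul_eq_mul {M : Matrix m m K} {N : Matrix n n K}
    {E : Matrix m n K} (hE : M * E = E * N) (p : K[X]) :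
    aeval M p * E = E * aeval N p := by
  have hpow : ∀ k : ℕ, M ^ k * E = E * N ^ k := by
    intro k
    induction k with
    | zero => simp
    | succ k ih => rw [pow_succ, pow_succ, Matrix.mul_assoc, hE, ← Matrix.mul_assoc, ih,
        Matrix.mul_assoc]
  induction p using Polynomial.induction_on' with
  | add p q hp hq => simp only [map_add, Matrix.add_mul, Matrix.mul_add, hp, hq]
  | monomial k a => simp only [aeval_monomial, Algebra.algebraMap_eq_smul_one, Matrix.smul_mul,
      Matrix.mul_smul, Matrix.one_mul, hpow]

open Polynomial in
theorem eq_zero_of_mul_eq_mul_of_disjoint_spectrum [IsAlgClosed K] {M : Matrix m m K}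
    {N : Matrix n n K} {E : Matrix m n K} (hMN : Disjoint (spectrum K M) (spectrum K N))
    (hE : M * E = E * N) : E = 0 := by
  rcases isEmpty_or_nonempty n with hn | hn
  · exact Subsingleton.elim _ _
  have hunit : IsUnit (aeval M N.charpoly) := by
    refine spectrum.isUnit_of_zero_notMem (R := K) fun h0 => ?_
    rw [spectrum.map_polynomial_aeval_of_degree_pos _ _ (by simp [charpoly_degree_eq_dim,
      Fintype.card_pos])] at h0
    obtain ⟨μ, hμM, hμN⟩ := h0
    exact hMN.ne_of_mem hμM (mem_spectrum_iff_isRoot_charpoly.2 hμN) rfl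
  obtain ⟨u, hu⟩ := hunit
  have huE : (u : Matrix m m K) * E = 0 := by
    rw [hu, aeval_mul_eq_mul_aeval_of_mul_eq_mul hE, aeval_self_charpoly, Matrix.mul_zero]
  calc E = (↑u⁻¹ * ↑u : Matrix m m K) * E := by rw [Units.inv_mul, Matrix.one_mul]
    _ = 0 := by rw [Matrix.mul_assoc, huE, Matrix.mul_zero]

theorem spectrum_transpose (M : Matrix n n K) : spectrum K Mᵀ = spectrum K M := by
  ext μ
  simp only [mem_spectrum_iff_isRoot_charpoly, charpoly_transpose]

end Matrix

theorem isOpen_setOf_spectrum_subset {𝕜 A : Type*} [NormedField 𝕜] [ProperSpace 𝕜] [NormedRing A]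
    [NormedAlgebra 𝕜 A] [CompleteSpace A] {U : Set 𝕜} (hU : IsOpen U) :
    IsOpen {a : A | spectrum 𝕜 a ⊆ U} :=
  isOpen_iff_mem_nhds.2 fun a ha =>
    ((upperHemicontinuous_spectrum 𝕜 A).upperHemicontinuousAt a).forall_isOpen U hU ha

section Lyapunov

variable {n : Type*} [Fintype n] [DecidableEq n]

theorem isOpen_setOf_isHurwitz :
    IsOpen {X : Matrix n n ℝ | IsHurwitz X} := by
  open scoped Matrix.Norms.Operator in
  have hopen : IsOpen {M : Matrix n n ℂ | spectrum ℂ M ⊆ {μ | μ.re < 0}} :=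
    isOpen_setOf_spectrum_subset (isOpen_lt Complex.continuous_re continuous_const)
  exact hopen.preimage (continuous_id.matrix_map Complex.continuous_ofReal)

def lyapunovMap {R : Type*} [CommRing R] (X : Matrix n n R) :
    Matrix n n R →ₗ[R] Matrix n n R :=
  LinearMap.mulLeft R Xᵀ + LinearMap.mulRight R X

@[simp]
theorem lyapunovMap_apply {R : Type*} [CommRing R] (X E : Matrix n n R) :
    lyapunovMap X E = Xᵀ * E + E * X :=
  rfl

theorem IsHurwitz.injective_lyapunovMap {X : Matrix n n ℝ} (hX : IsHurwitz X) :
    Function.Injective (lyapunovMap X) := by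
  refine (injective_iff_map_eq_zero _).2 fun E hE => ?_
  set f := (algebraMap ℝ ℂ).mapMatrix (m := n)
  have hcomm : (f X)ᵀ * f E = f E * -f X := by
    have := congrArg f hE
    rw [lyapunovMap_apply, map_add, map_mul, map_mul, map_zero, RingHom.mapMatrix_apply,
      transpose_map] at this
    rw [Matrix.mul_neg, ← add_eq_zero_iff_eq_neg]
    exact this
  have hdisj : Disjoint (spectrum ℂ (f X)ᵀ) (spectrum ℂ (-f X)) := by
    rw [spectrum_transpose, ← spectrum.neg_eq, Set.disjoint_left]
    intro μ hμ hμ'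
    have hneg := hX (-μ) hμ'
    rw [Complex.neg_re] at hneg
    linarith [hX μ hμ]
  exact Matrix.map_injective Complex.ofReal_injective
    ((eq_zero_of_mul_eq_mul_of_disjoint_spectrum hdisj hcomm).trans (Matrix.map_zero _ rfl).symm)

end Lyapunov

section Riccati

variable {R n : Type*} [CommRing R] [Fintype n] [DecidableEq n] {A K Q P₀ P P' : Matrix n n R}

theorem lyapunovMap_sub_eq_of_riccati (hK : K.IsSymm) (hP₀ : P₀.IsSymm) (hP : P.IsSymm)
    (hARE : Aᵀ * P₀ + P₀ * A - P₀ * K * P₀ + Q = 0)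
    (hLyap : (A - K * P)ᵀ * P' + P' * (A - K * P) = -(Q + P * K * P)) :
    lyapunovMap (A - K * P₀) (P' - P₀) =
      (P - P₀) * K * (P' - P₀) + (P' - P₀) * K * (P - P₀) - (P - P₀) * K * (P - P₀) := by
  have htranspose : ∀ Y : Matrix n n R, Y.IsSymm → (A - K * Y)ᵀ = Aᵀ - Y * K := fun Y hY => by
    rw [transpose_sub, transpose_mul, hK.eq, hY.eq]
  rw [htranspose P hP, ← sub_eq_zero] at hLyap
  rw [lyapunovMap_apply, htranspose P₀ hP₀, ← sub_eq_zero]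
  calc _ = ((Aᵀ - P * K) * P' + P' * (A - K * P) - -(Q + P * K * P))
        - (Aᵀ * P₀ + P₀ * A - P₀ * K * P₀ + Q) := by noncomm_ring
    _ = 0 := by rw [hLyap, hARE, sub_zero]

end Riccati

open scoped Matrix.Norms.Frobenius Topology

theorem frobNorm_eq_norm {m n : Type*} [Fintype m] [Fintype n] (X : Matrix m n ℝ) :
    frobNorm X = ‖X‖ := by
  simp [frobNorm, frobenius_norm_def, Real.sqrt_eq_rpow]

theorem norm_sub_le_quadratic_of_riccati {n : Type*} [Fintype n] [DecidableEq n]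
    {A K Q P₀ P P' : Matrix n n ℝ} {c : NNReal} (hK : K.IsSymm) (hP₀ : P₀.IsSymm)
    (hP : P.IsSymm) (hARE : Aᵀ * P₀ + P₀ * A - P₀ * K * P₀ + Q = 0)
    (hLyap : (A - K * P)ᵀ * P' + P' * (A - K * P) = -(Q + P * K * P))
    (hc : AntilipschitzWith c (lyapunovMap (A - K * P₀))) :
    ‖P' - P₀‖ ≤ c * ‖K‖ * (‖P - P₀‖ ^ 2 + 2 * ‖P - P₀‖ * ‖P' - P₀‖) := by
  set Δ := P - P₀
  set Δ' := P' - P₀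
  calc ‖Δ'‖ ≤ c * ‖Δ * K * Δ' + Δ' * K * Δ - Δ * K * Δ‖ := by
        rw [← lyapunovMap_sub_eq_of_riccati hK hP₀ hP hARE hLyap]
        exact hc.le_mul_norm (map_zero _) Δ'
    _ ≤ c * (‖Δ * K * Δ'‖ + ‖Δ' * K * Δ‖ + ‖Δ * K * Δ‖) := by
        gcongr; exact (norm_sub_le _ _).trans (by grw [norm_add_le])
    _ ≤ c * (‖Δ‖ * ‖K‖ * ‖Δ'‖ + ‖Δ'‖ * ‖K‖ * ‖Δ‖ + ‖Δ‖ * ‖K‖ * ‖Δ‖) := by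
        gcongr <;> exact norm_mul₃_le
    _ = c * ‖K‖ * (‖Δ‖ ^ 2 + 2 * ‖Δ‖ * ‖Δ'‖) := by ring

theorem le_mul_of_le_quadratic {κ σ d e : ℝ} (hd : 0 ≤ d) (he : 0 ≤ e) (h₁ : κ * d ≤ 1 / 4)
    (h₂ : κ * d ≤ σ / 2) (h : e ≤ κ * (d ^ 2 + 2 * d * e)) : e ≤ σ * d := by
  nlinarith [mul_le_mul_of_nonneg_right h₁ he, mul_le_mul_of_nonneg_right h₂ hd]

theorem kleinman_local_exponential_stability_general
    (n m : ℕ)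
    (A : Matrix (Fin n) (Fin n) ℝ) (B : Matrix (Fin n) (Fin m) ℝ)
    (Q : Matrix (Fin n) (Fin n) ℝ) (R : Matrix (Fin m) (Fin m) ℝ)
    (hR : R.PosDef)
    (Pstar : Matrix (Fin n) (Fin n) ℝ) (hPstar : Pstar.PosDef)
    (hARE : Aᵀ * Pstar + Pstar * A - Pstar * B * R⁻¹ * Bᵀ * Pstar + Q = 0)
    (hAstar : IsHurwitz (A - B * R⁻¹ * Bᵀ * Pstar))
    (σ : ℝ) (hσ0 : 0 < σ) :
    ∃ δ₀ > 0, ∀ P : Matrix (Fin n) (Fin n) ℝ, P.IsSymm → frobNorm (P - Pstar) < δ₀ →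
      IsHurwitz (A - B * R⁻¹ * Bᵀ * P) ∧
      ∀ P' : Matrix (Fin n) (Fin n) ℝ, P'.IsSymm →
        (A - B * R⁻¹ * Bᵀ * P)ᵀ * P' + P' * (A - B * R⁻¹ * Bᵀ * P)
            = -(Q + P * B * R⁻¹ * Bᵀ * P) →
        frobNorm (P' - Pstar) ≤ σ * frobNorm (P - Pstar) := by
  set K := B * R⁻¹ * Bᵀ
  have hK : K.IsSymm := by
    simp [K, IsSymm, transpose_mul, (isHermitian_iff_isSymm.1 hR.isHermitian).inv.eq,
      Matrix.mul_assoc]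
  have hassoc : ∀ X Y : Matrix (Fin n) (Fin n) ℝ, X * B * R⁻¹ * Bᵀ * Y = X * K * Y :=
    fun X Y => by simp only [K, Matrix.mul_assoc]
  rw [hassoc] at hARE
  obtain ⟨c, -, hc⟩ :=
    (lyapunovMap (A - K * Pstar)).injective_iff_antilipschitz.1 hAstar.injective_lyapunovMap
  have hsmall : ∀ ε > 0, ∀ᶠ P in 𝓝 Pstar, c * ‖K‖ * ‖P - Pstar‖ < ε := fun ε hε =>
    ((tendsto_norm_sub_self Pstar).const_mul _).eventually (gt_mem_nhds (by simpa))
  have hHurwitz : ∀ᶠ P in 𝓝 Pstar, IsHurwitz (A - K * P) :=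
    (continuous_const.sub (continuous_const.mul continuous_id)).continuousAt.eventually_mem
      (isOpen_setOf_isHurwitz.mem_nhds hAstar)
  obtain ⟨δ, hδ, hball⟩ := Metric.eventually_nhds_iff.1
    (hHurwitz.and ((hsmall (1 / 4) (by norm_num)).and (hsmall (σ / 2) (by positivity))))
  refine ⟨δ, hδ, fun P hP hPδ => ?_⟩
  rw [frobNorm_eq_norm, ← dist_eq_norm] at hPδ
  obtain ⟨hHurwitz, h₁, h₂⟩ := hball hPδ
  refine ⟨hHurwitz, fun P' _ hLyap => ?_⟩
  rw [hassoc] at hLyap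
  simp only [frobNorm_eq_norm]
  exact le_mul_of_le_quadratic (norm_nonneg _) (norm_nonneg _) h₁.le h₂.le
    (norm_sub_le_quadratic_of_riccati hK (isHermitian_iff_isSymm.1 hPstar.isHermitian) hP hARE
      hLyap hc)

/-- local exponential stability of the exact Kleinman iteration at `P*`. -/
theorem kleinman_local_exponential_stability
    (n m : ℕ) (hn : 0 < n) (hm : 0 < m)
    (A : Matrix (Fin n) (Fin n) ℝ) (B : Matrix (Fin n) (Fin m) ℝ)
    (Q : Matrix (Fin n) (Fin n) ℝ) (R : Matrix (Fin m) (Fin m) ℝ)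
    (hQ : Q.PosSemidef) (hR : R.PosDef)
    (Pstar : Matrix (Fin n) (Fin n) ℝ) (hPstar : Pstar.PosDef)
    (hARE : Aᵀ * Pstar + Pstar * A - Pstar * B * R⁻¹ * Bᵀ * Pstar + Q = 0)
    (hAstar : IsHurwitz (A - B * R⁻¹ * Bᵀ * Pstar))
    (σ : ℝ) (hσ0 : 0 < σ) (hσ1 : σ < 1) :
    ∃ δ₀ > 0, ∀ P : Matrix (Fin n) (Fin n) ℝ, P.IsSymm → frobNorm (P - Pstar) < δ₀ →
      IsHurwitz (A - B * R⁻¹ * Bᵀ * P) ∧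
      ∀ P' : Matrix (Fin n) (Fin n) ℝ, P'.IsSymm →
        (A - B * R⁻¹ * Bᵀ * P)ᵀ * P' + P' * (A - B * R⁻¹ * Bᵀ * P)
            = -(Q + P * B * R⁻¹ * Bᵀ * P) →
        frobNorm (P' - Pstar) ≤ σ * frobNorm (P - Pstar) :=
  kleinman_local_exponential_stability_general n m A B Q R hR Pstar hPstar hARE hAstar σ hσ0
end
end

section
/- Assume Q − Iₙ is positive semidefinite. Let K ∈ ℝ^{m×n} be stabilizing, let P be the unique symmetric solution of (A − BK)ᵀP + P(A − BK) + Q + KᵀRK = 0, and assume 𝒜(P) = A − B R⁻¹ Bᵀ P is Hurwitz. Let H be the unique solution of 𝒜(P)ᵀH + H𝒜(P) = −Iₙ. Then H is positive definite and P − H is positive semidefinite; in particular ‖H‖_F ≤ ‖P‖_F. -/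
/-!
Positivity of Lyapunov solutions is reduced to the discrete-time (Stein) case by the Cayley
transform. If `𝒜` is Hurwitz, the spectrum of `C = (1 + 𝒜)(1 - 𝒜)⁻¹` lies in the open unit disc,
so `Cᴺ → 0` by Gelfand's formula, and `𝒜ᵀY + Y𝒜 = -Z` becomes
`Y = CᵀYC + (1 - 𝒜)⁻ᵀ (2Z) (1 - 𝒜)⁻¹`. Iterating gives `Y = (Cᴺ)ᵀYCᴺ + (PSD terms)`, so `Y ≥ 0`
when `Z ≥ 0`, `Y > 0` when `Z > 0`, and `Y = 0` when `Z = 0` (which also makes `Y` symmetric).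

Completing the square in the gain with `G = R⁻¹BᵀP` turns the policy-evaluation equation into
`𝒜ᵀP + P𝒜 = -(Q + (K - G)ᵀR(K - G) + GᵀRG)`, so `P - H` solves the Lyapunov equation of `𝒜` with
right-hand side `(Q - 1) + (K - G)ᵀR(K - G) + GᵀRG ≥ 0`. Finally `0 ≤ H ≤ P` gives
`tr(P²) - tr(H²) = tr((P - H)P) + tr(H(P - H)) ≥ 0`.
-/

open Matrix MeasureTheory Filter NormedSpace
open scoped Kronecker

noncomputable section

attribute [local instance] Matrix.normedAddCommGroup Matrix.normedSpace

open Topology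

theorem tendsto_pow_atTop_nhds_zero_of_forall_norm_lt_one {A : Type*} [NormedRing A]
    [NormedAlgebra ℂ A] [CompleteSpace A] {a : A} (h : ∀ z ∈ spectrum ℂ a, ‖z‖ < 1) :
    Tendsto (a ^ ·) atTop (𝓝 0) := by
  rcases subsingleton_or_nontrivial A with hA | hA
  · simp [Subsingleton.elim _ (0 : A)]
  obtain ⟨r, hρr, hr1⟩ := ENNReal.lt_iff_exists_nnreal_btwn.mp <|
    spectrum.spectralRadius_lt_of_forall_lt a (r := 1) fun z hz ↦ by exact_mod_cast h z hz
  have hbound : ∀ᶠ N : ℕ in atTop, ‖a ^ N‖ ≤ r ^ N := by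
    filter_upwards [(spectrum.gelfand_formula a).eventually_lt_const hρr,
      eventually_gt_atTop 0] with N hN hN0
    rw [one_div] at hN
    have := (ENNReal.rpow_inv_le_iff (Nat.cast_pos.mpr hN0)).mp hN.le
    rw [ENNReal.rpow_natCast] at this
    exact_mod_cast this
  exact squeeze_zero_norm' hbound <|
    tendsto_pow_atTop_nhds_zero_of_lt_one r.coe_nonneg (by exact_mod_cast hr1)

-- `Re ((μ - 1) / (μ + 1)) = (‖μ‖² - 1) / ‖μ + 1‖²`
theorem Complex.norm_lt_one_of_re_div_neg {μ : ℂ} (h : ((μ - 1) / (μ + 1)).re < 0) :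
    ‖μ‖ < 1 := by
  rw [Complex.div_re, ← add_div] at h
  have hnum : (μ - 1).re * (μ + 1).re + (μ - 1).im * (μ + 1).im < 0 :=
    neg_of_div_neg_left h (Complex.normSq_nonneg _)
  have hsq : ‖μ‖ ^ 2 < 1 := by
    rw [Complex.sq_norm, Complex.normSq_apply]
    simp only [Complex.sub_re, Complex.add_re, Complex.one_re, Complex.sub_im, Complex.add_im,
      Complex.one_im] at hnum
    nlinarith
  nlinarith [norm_nonneg μ]

section Cayley

variable {A : Type*} [Ring A] [Algebra ℂ A] {x c : A}

theorem isUnit_one_sub_of_forall_re_neg (hx : ∀ z ∈ spectrum ℂ x, z.re < 0) :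
    IsUnit (1 - x) := by
  simpa using spectrum.notMem_iff.mp fun h ↦ (hx 1 h).not_ge zero_le_one

theorem norm_lt_one_of_mem_spectrum_cayley (hx : ∀ z ∈ spectrum ℂ x, z.re < 0)
    (hc : c * (1 - x) = 1 + x) {μ : ℂ} (hμ : μ ∈ spectrum ℂ c) : ‖μ‖ < 1 := by
  have hfactor : (algebraMap ℂ A μ - c) * (1 - x) = (μ - 1) • 1 - (μ + 1) • x := by
    rw [sub_mul, hc, Algebra.algebraMap_eq_smul_one, smul_mul_assoc, one_mul]
    module
  have hnu : ¬IsUnit ((μ - 1) • (1 : A) - (μ + 1) • x) := by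
    rwa [← hfactor, (isUnit_one_sub_of_forall_re_neg hx).mul_right_iff]
  have hμ1 : μ + 1 ≠ 0 := by
    intro h
    obtain rfl : μ = -1 := eq_neg_of_add_eq_zero_left h
    refine hnu ?_
    rw [neg_add_cancel, zero_smul, sub_zero, ← Algebra.algebraMap_eq_smul_one]
    exact (isUnit_iff_ne_zero.mpr (by norm_num)).map _
  refine Complex.norm_lt_one_of_re_div_neg (hx _ fun hres ↦ hnu ?_)
  have hscale : (μ - 1) • (1 : A) - (μ + 1) • x =
      Units.mk0 (μ + 1) hμ1 • (algebraMap ℂ A ((μ - 1) / (μ + 1)) - x) := by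
    rw [Units.smul_mk0, Algebra.algebraMap_eq_smul_one, smul_sub, smul_smul,
      mul_div_cancel₀ _ hμ1]
  rw [hscale, isUnit_smul_iff]
  exact spectrum.mem_resolventSet_iff.mp hres

end Cayley

def Matrix.cayley {n : Type*} [Fintype n] [DecidableEq n] (X : Matrix n n ℝ) : Matrix n n ℝ :=
  (1 + X) * (1 - X)⁻¹

section Hurwitz

variable {n : Type*} [Fintype n] [DecidableEq n] {X : Matrix n n ℝ}

theorem IsHurwitz.isUnit_one_sub (hX : IsHurwitz X) : IsUnit (1 - X) := by
  have h : IsUnit ((algebraMap ℝ ℂ).mapMatrix (1 - X)) := by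
    simpa [map_sub] using isUnit_one_sub_of_forall_re_neg hX
  rw [isUnit_iff_isUnit_det, ← RingHom.map_det, isUnit_iff_ne_zero, map_ne_zero] at h
  exact (isUnit_iff_isUnit_det _).mpr h.isUnit

theorem IsHurwitz.tendsto_cayley_pow (hX : IsHurwitz X) :
    Tendsto (X.cayley ^ ·) atTop (𝓝 0) := by
  let f := (algebraMap ℝ ℂ).mapMatrix (m := n)
  have hC : f X.cayley * (1 - f X) = 1 + f X := by
    rw [← map_one f, ← map_sub, ← map_mul, Matrix.cayley,
      nonsing_inv_mul_cancel_right _ _ ((isUnit_iff_isUnit_det _).mp hX.isUnit_one_sub), map_add]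
  have hlim : Tendsto (f X.cayley ^ ·) atTop (𝓝 0) := by
    open scoped Matrix.Norms.L2Operator in
    exact tendsto_pow_atTop_nhds_zero_of_forall_norm_lt_one fun μ hμ ↦
      norm_lt_one_of_mem_spectrum_cayley hX hC hμ
  have hre : Continuous fun M : Matrix n n ℂ ↦ M.map Complex.re :=
    continuous_id.matrix_map Complex.continuous_re
  convert (hre.tendsto 0).comp hlim using 1
  · ext N : 1
    rw [Function.comp_apply, ← map_pow]
    ext i j
    simp [f]
  · simp

end Hurwitz

theorem Matrix.PosSemidef.transpose_mul_mul_same {n m : Type*} [Fintype n] [Fintype m]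
    {A : Matrix n n ℝ} (hA : A.PosSemidef) (B : Matrix n m ℝ) : (Bᵀ * A * B).PosSemidef := by
  simpa using hA.conjTranspose_mul_mul_same B

section Stein

variable {n : Type*} [Fintype n] [DecidableEq n] {C Y W : Matrix n n ℝ}

theorem tendsto_transpose_pow_mul_mul_pow (hC : Tendsto (C ^ ·) atTop (𝓝 0)) :
    Tendsto (fun N ↦ (C ^ N)ᵀ * Y * C ^ N) atTop (𝓝 0) := by
  have hcont : Continuous fun M : Matrix n n ℝ ↦ Mᵀ * Y * M :=
    (continuous_id.matrix_transpose.matrix_mul continuous_const).matrix_mul continuous_id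
  simpa only [Function.comp_def, transpose_zero, zero_mul, mul_zero] using
    (hcont.tendsto 0).comp hC

theorem eq_transpose_pow_mul_mul_pow_add_sum (h : Y = Cᵀ * Y * C + W) (N : ℕ) :
    Y = (C ^ N)ᵀ * Y * C ^ N + ∑ k ∈ Finset.range N, (C ^ k)ᵀ * W * C ^ k := by
  induction N with
  | zero => simp
  | succ N ih =>
    rw [Finset.sum_range_succ, pow_succ', transpose_mul]
    nth_rw 1 [ih, h]
    noncomm_ring

theorem eq_zero_of_eq_transpose_mul_mul (hC : Tendsto (C ^ ·) atTop (𝓝 0))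
    (h : Y = Cᵀ * Y * C) : Y = 0 := by
  have hconst (N : ℕ) : (C ^ N)ᵀ * Y * C ^ N = Y := by
    simpa using (eq_transpose_pow_mul_mul_pow_add_sum (W := 0) (by simpa using h) N).symm
  have hY : Tendsto (fun N ↦ (C ^ N)ᵀ * Y * C ^ N) atTop (𝓝 Y) := by
    simp only [hconst]
    exact tendsto_const_nhds
  exact tendsto_nhds_unique hY (tendsto_transpose_pow_mul_mul_pow hC)

theorem posSemidef_of_eq_transpose_mul_mul_add (hC : Tendsto (C ^ ·) atTop (𝓝 0))
    (hY : Y.IsHermitian) (hW : W.PosSemidef) (h : Y = Cᵀ * Y * C + W) : Y.PosSemidef := by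
  refine .of_dotProduct_mulVec_nonneg hY fun v ↦ ?_
  have hquad : Continuous fun M : Matrix n n ℝ ↦ star v ⬝ᵥ M *ᵥ v :=
    continuous_const.dotProduct (continuous_id.matrix_mulVec continuous_const)
  have hlim : Tendsto (fun N ↦ star v ⬝ᵥ ((C ^ N)ᵀ * Y * C ^ N) *ᵥ v) atTop (𝓝 0) := by
    simpa only [Function.comp_def, zero_mulVec, dotProduct_zero] using
      (hquad.tendsto 0).comp (tendsto_transpose_pow_mul_mul_pow hC)
  refine le_of_tendsto hlim (Eventually.of_forall fun N ↦ ?_)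
  have hsum : (∑ k ∈ Finset.range N, (C ^ k)ᵀ * W * C ^ k).PosSemidef :=
    posSemidef_sum _ fun k _ ↦ hW.transpose_mul_mul_same (C ^ k)
  conv_rhs => rw [eq_transpose_pow_mul_mul_pow_add_sum h N]
  rw [add_mulVec, dotProduct_add]
  exact le_add_of_nonneg_right (hsum.dotProduct_mulVec_nonneg v)

theorem posDef_of_eq_transpose_mul_mul_add (hC : Tendsto (C ^ ·) atTop (𝓝 0))
    (hY : Y.IsHermitian) (hW : W.PosDef) (h : Y = Cᵀ * Y * C + W) : Y.PosDef := by
  have hY' := posSemidef_of_eq_transpose_mul_mul_add hC hY hW.posSemidef h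
  rw [h]
  exact PosDef.posSemidef_add (hY'.transpose_mul_mul_same C) hW

end Stein

section Lyapunov

variable {n : Type*} [Fintype n] [DecidableEq n] {X Y Z : Matrix n n ℝ}

theorem IsHurwitz.eq_cayley_transpose_mul_mul_add (hX : IsHurwitz X)
    (h : Xᵀ * Y + Y * X = -Z) :
    Y = X.cayleyᵀ * Y * X.cayley + ((1 - X)⁻¹)ᵀ * ((2 : ℝ) • Z) * (1 - X)⁻¹ := by
  have hS := (isUnit_iff_isUnit_det _).mp hX.isUnit_one_sub
  have hST : IsUnit (1 - X)ᵀ.det := by rwa [det_transpose]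
  have hsq : (1 + X)ᵀ * Y * (1 + X) + (2 : ℝ) • Z = (1 - X)ᵀ * Y * (1 - X) := by
    rw [two_smul, ← neg_neg Z, ← h, transpose_add, transpose_sub, transpose_one]
    noncomm_ring
  calc Y = ((1 - X)⁻¹)ᵀ * ((1 - X)ᵀ * Y * (1 - X)) * (1 - X)⁻¹ := by
        rw [transpose_nonsing_inv, Matrix.mul_assoc _ Y, nonsing_inv_mul_cancel_left _ _ hST,
          mul_nonsing_inv_cancel_right _ _ hS]
    _ = X.cayleyᵀ * Y * X.cayley + ((1 - X)⁻¹)ᵀ * ((2 : ℝ) • Z) * (1 - X)⁻¹ := by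
        rw [← hsq, cayley, transpose_mul]
        noncomm_ring

theorem IsHurwitz.eq_zero_of_lyapunov (hX : IsHurwitz X) (h : Xᵀ * Y + Y * X = 0) : Y = 0 :=
  eq_zero_of_eq_transpose_mul_mul hX.tendsto_cayley_pow <| by
    simpa using hX.eq_cayley_transpose_mul_mul_add (Z := 0) (by simpa using h)

theorem IsHurwitz.isSymm_of_lyapunov (hX : IsHurwitz X) (hZ : Z.IsSymm)
    (h : Xᵀ * Y + Y * X = -Z) : Y.IsSymm := by
  have hT : Xᵀ * Yᵀ + Yᵀ * X = -Z := by
    simpa [add_comm, hZ.eq] using congrArg transpose h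
  refine sub_eq_zero.mp (hX.eq_zero_of_lyapunov ?_)
  rw [Matrix.mul_sub, Matrix.sub_mul, ← add_sub_add_comm, hT, h, sub_self]

theorem IsHurwitz.posSemidef_of_lyapunov (hX : IsHurwitz X) (hZ : Z.PosSemidef)
    (h : Xᵀ * Y + Y * X = -Z) : Y.PosSemidef := by
  have hY : Y.IsHermitian := isHermitian_iff_isSymm.mpr <|
    hX.isSymm_of_lyapunov (isHermitian_iff_isSymm.mp hZ.isHermitian) h
  refine posSemidef_of_eq_transpose_mul_mul_add hX.tendsto_cayley_pow hY ?_
    (hX.eq_cayley_transpose_mul_mul_add h)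
  exact (hZ.smul zero_le_two).transpose_mul_mul_same (1 - X)⁻¹

theorem IsHurwitz.posDef_of_lyapunov (hX : IsHurwitz X) (hZ : Z.PosDef)
    (h : Xᵀ * Y + Y * X = -Z) : Y.PosDef := by
  have hY : Y.IsHermitian := (hX.posSemidef_of_lyapunov hZ.posSemidef h).isHermitian
  refine posDef_of_eq_transpose_mul_mul_add hX.tendsto_cayley_pow hY ?_
    (hX.eq_cayley_transpose_mul_mul_add h)
  have hinj : Function.Injective (1 - X)⁻¹.mulVec :=
    mulVec_injective_iff_isUnit.mpr (isUnit_nonsing_inv_iff.mpr hX.isUnit_one_sub)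
  have := (hZ.smul (zero_lt_two (α := ℝ))).conjTranspose_mul_mul_same hinj
  rwa [conjTranspose_eq_transpose_of_trivial] at this

end Lyapunov

section CompleteSquare

variable {n m : Type*} [Fintype n] [Fintype m] {R : Type*} [CommRing R]

theorem lyapunov_gain_completeSquare (A : Matrix n n R) (B : Matrix n m R) (K G : Matrix m n R)
    {P : Matrix n n R} {S : Matrix m m R} (hG : S * G = Bᵀ * P) (hG' : Gᵀ * S = P * B) :
    (A - B * K)ᵀ * P + P * (A - B * K) + Kᵀ * S * K =
      (A - B * G)ᵀ * P + P * (A - B * G) + ((K - G)ᵀ * S * (K - G) + Gᵀ * S * G) := by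
  have hGK : Gᵀ * (S * K) = P * (B * K) := by rw [← Matrix.mul_assoc, hG', Matrix.mul_assoc]
  have hGG : Gᵀ * (Bᵀ * P) = P * (B * G) := by
    rw [← hG, ← Matrix.mul_assoc, hG', Matrix.mul_assoc]
  simp only [transpose_sub, transpose_mul, Matrix.sub_mul, Matrix.mul_sub, Matrix.mul_assoc, hG,
    hGK, hGG]
  abel

end CompleteSquare

section Frobenius

variable {n : Type*} [Fintype n]

open scoped MatrixOrder in
theorem Matrix.PosSemidef.trace_mul_nonneg {A B : Matrix n n ℝ} (hA : A.PosSemidef)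
    (hB : B.PosSemidef) : 0 ≤ (A * B).trace := by
  classical
  obtain ⟨s, hs, hss⟩ : ∃ s : Matrix n n ℝ, sᴴ = s ∧ s * s = A :=
    ⟨CFC.sqrt A, (CFC.sqrt_nonneg A).posSemidef.isHermitian, CFC.sqrt_mul_sqrt_self A hA.nonneg⟩
  rw [← hss, Matrix.mul_assoc, trace_mul_comm]
  nth_rw 1 [← hs]
  exact (hB.conjTranspose_mul_mul_same s).trace_nonneg

theorem frobNorm_eq_sqrt_trace (X : Matrix n n ℝ) : frobNorm X = √(Xᵀ * X).trace := by
  rw [frobNorm, trace, Finset.sum_comm]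
  simp [mul_apply, sq]

theorem frobNorm_le_of_posSemidef {H P : Matrix n n ℝ} (hH : H.PosSemidef)
    (hPH : (P - H).PosSemidef) : frobNorm H ≤ frobNorm P := by
  have hP : P.IsHermitian := by simpa using hPH.isHermitian.add hH.isHermitian
  have hsplit : (P * P).trace - (H * H).trace = ((P - H) * P).trace + (H * (P - H)).trace := by
    rw [Matrix.sub_mul, Matrix.mul_sub, trace_sub, trace_sub, trace_mul_comm H P]
    ring
  have hP' := hPH.trace_mul_nonneg (by simpa using hPH.add hH)
  have hH' := hH.trace_mul_nonneg hPH
  rw [frobNorm_eq_sqrt_trace, frobNorm_eq_sqrt_trace, (isHermitian_iff_isSymm.mp hP).eq,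
    (isHermitian_iff_isSymm.mp hH.isHermitian).eq]
  gcongr
  linarith

end Frobenius

theorem lyapunov_identity_solution_dominated_general
    (n m : ℕ)
    (A : Matrix (Fin n) (Fin n) ℝ) (B : Matrix (Fin n) (Fin m) ℝ)
    (Q : Matrix (Fin n) (Fin n) ℝ) (R : Matrix (Fin m) (Fin m) ℝ)
    (hR : R.PosDef)
    (hQ1 : (Q - 1).PosSemidef)
    (K : Matrix (Fin m) (Fin n) ℝ)
    (P : Matrix (Fin n) (Fin n) ℝ) (hP : P.IsSymm)
    (hPE : (A - B * K)ᵀ * P + P * (A - B * K) + Q + Kᵀ * R * K = 0)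
    (hHur : IsHurwitz (A - B * R⁻¹ * Bᵀ * P))
    (H : Matrix (Fin n) (Fin n) ℝ)
    (hH : (A - B * R⁻¹ * Bᵀ * P)ᵀ * H + H * (A - B * R⁻¹ * Bᵀ * P)
        = -(1 : Matrix (Fin n) (Fin n) ℝ)) :
    H.PosDef ∧ (P - H).PosSemidef ∧ frobNorm H ≤ frobNorm P := by
  set G := R⁻¹ * Bᵀ * P
  have hX : A - B * R⁻¹ * Bᵀ * P = A - B * G := by simp only [G, Matrix.mul_assoc]
  rw [hX] at hHur hH
  have hG : R * G = Bᵀ * P := by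
    simp only [G, Matrix.mul_assoc]
    exact mul_nonsing_inv_cancel_left _ _ ((isUnit_iff_isUnit_det R).mp hR.isUnit)
  have hG' : Gᵀ * R = P * B := by
    rw [← (isHermitian_iff_isSymm.mp hR.isHermitian).eq, ← transpose_mul, hG, transpose_mul,
      transpose_transpose, hP.eq]
  have hP' : (A - B * G)ᵀ * P + P * (A - B * G) =
      -(Q + ((K - G)ᵀ * R * (K - G) + Gᵀ * R * G)) := by
    rw [eq_neg_iff_add_eq_zero, ← hPE, add_right_comm _ Q (Kᵀ * R * K),
      lyapunov_gain_completeSquare A B K G hG hG']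
    abel
  have hPH : (A - B * G)ᵀ * (P - H) + (P - H) * (A - B * G) =
      -((Q - 1) + ((K - G)ᵀ * R * (K - G) + Gᵀ * R * G)) := by
    rw [Matrix.mul_sub, Matrix.sub_mul, sub_add_sub_comm, hP', hH]
    abel
  have hPHpsd : (P - H).PosSemidef := hHur.posSemidef_of_lyapunov
    (hQ1.add ((hR.posSemidef.transpose_mul_mul_same _).add
      (hR.posSemidef.transpose_mul_mul_same _))) hPH
  have hHpd : H.PosDef := hHur.posDef_of_lyapunov PosDef.one hH
  exact ⟨hHpd, hPHpsd, frobNorm_le_of_posSemidef hHpd.posSemidef hPHpsd⟩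

/-- if `Q ≥ Iₙ`, the solution `H` of `𝒜(P)ᵀH + H𝒜(P) = -Iₙ` is positive
definite and dominated by the policy-evaluation solution `P`; in particular
`‖H‖_F ≤ ‖P‖_F`. -/
theorem lyapunov_identity_solution_dominated
    (n m : ℕ) (hn : 0 < n) (hm : 0 < m)
    (A : Matrix (Fin n) (Fin n) ℝ) (B : Matrix (Fin n) (Fin m) ℝ)
    (Q : Matrix (Fin n) (Fin n) ℝ) (R : Matrix (Fin m) (Fin m) ℝ)
    (hQ : Q.PosSemidef) (hR : R.PosDef)
    (hQ1 : (Q - 1).PosSemidef)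
    (K : Matrix (Fin m) (Fin n) ℝ) (hK : IsHurwitz (A - B * K))
    (P : Matrix (Fin n) (Fin n) ℝ) (hP : P.IsSymm)
    (hPE : (A - B * K)ᵀ * P + P * (A - B * K) + Q + Kᵀ * R * K = 0)
    (hHur : IsHurwitz (A - B * R⁻¹ * Bᵀ * P))
    (H : Matrix (Fin n) (Fin n) ℝ)
    (hH : (A - B * R⁻¹ * Bᵀ * P)ᵀ * H + H * (A - B * R⁻¹ * Bᵀ * P)
        = -(1 : Matrix (Fin n) (Fin n) ℝ)) :
    H.PosDef ∧ (P - H).PosSemidef ∧ frobNorm H ≤ frobNorm P :=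
  lyapunov_identity_solution_dominated_general n m A B Q R hR hQ1 K P hP hPE hHur H hH
end
end

section
/- Let δ₀ > 0 be such that 𝒜(P) = A − B R⁻¹ Bᵀ P is Hurwitz for every symmetric P with ‖P − P*‖_F ≤ δ₀. Then there exists d > 0, independent of P, such that for every symmetric P with ‖P − P*‖_F < δ₀ and every symmetric ΔG ∈ ℝ^{(n+m)×(n+m)} with ‖ΔG‖_F < d (with lower-left block ΔG₂₁ ∈ ℝ^{m×n} and lower-right block ΔG₂₂ ∈ ℝ^{m×m}): the matrix R + ΔG₂₂ is invertible and A − B(R + ΔG₂₂)⁻¹(BᵀP + ΔG₂₁) is Hurwitz. -/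
/-!
Hurwitz stability is an open condition, because the spectrum in a complex Banach algebra is
upper semicontinuous: invertibility of `μ - a` persists under small perturbations of `a`,
uniformly for `μ` in the compact set of points of a large disc that the spectrum must avoid,
and beyond that disc `‖a‖` keeps `μ` out of the spectrum. Hence the pairs `(ΔG, P)` for which
`R + ΔG₂₂` is invertible and the disturbed closed loop is Hurwitz form an open set. For `ΔG = 0`
it contains the compact set of symmetric `P` with `‖P - P*‖_F ≤ δ₀`, and the tube lemma gives a
radius `d` uniform in `P`.
-/

open Matrix MeasureTheory Filter NormedSpace
open scoped Kronecker

noncomputable section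

attribute [local instance] Matrix.normedAddCommGroup Matrix.normedSpace

open Topology

section SpectrumOpen

variable {𝕜 A : Type*} [NontriviallyNormedField 𝕜] [ProperSpace 𝕜]
  [NormedRing A] [NormedAlgebra 𝕜 A] [CompleteSpace A]

theorem spectrum.isOpen_setOf_subset {U : Set 𝕜} (hU : IsOpen U) :
    IsOpen {a : A | spectrum 𝕜 a ⊆ U} := by
  refine isOpen_iff_eventually.mpr fun a ha => ?_
  set r := (‖a‖ + 1) * ‖(1 : A)‖
  have hK : IsCompact (Metric.closedBall (0 : 𝕜) r \ U) :=
    (isCompact_closedBall 0 r).diff hU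
  have hunits : ∀ᶠ b in 𝓝 a, ∀ μ ∈ Metric.closedBall (0 : 𝕜) r \ U,
      IsUnit (algebraMap 𝕜 A μ - b) := by
    refine hK.eventually_forall_of_forall_eventually fun μ hμ => ?_
    have hcont : Continuous fun z : A × 𝕜 => algebraMap 𝕜 A z.2 - z.1 := by fun_prop
    exact hcont.continuousAt.eventually_mem (Units.isOpen.mem_nhds
      (spectrum.notMem_iff.mp fun h => hμ.2 (ha h)))
  have hnorm : ∀ᶠ b in 𝓝 a, ‖b‖ < ‖a‖ + 1 :=
    continuous_norm.continuousAt.eventually_lt continuousAt_const (lt_add_one _)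
  filter_upwards [hunits, hnorm] with b hb hbn μ hμ
  by_contra hμU
  by_cases hμr : ‖μ‖ ≤ r
  · exact spectrum.notMem_iff.mpr (hb μ ⟨by simpa using hμr, hμU⟩) hμ
  · refine hμ (spectrum.mem_resolventSet_of_norm_lt_mul ?_)
    exact (mul_le_mul_of_nonneg_right hbn.le (norm_nonneg _)).trans_lt (not_le.mp hμr)

end SpectrumOpen

theorem isOpen_setOf_isHurwitz_s12 {ι : Type*} [Fintype ι] [DecidableEq ι] :
    IsOpen {X : Matrix ι ι ℝ | IsHurwitz X} := by
  -- the ambient sup norm on matrices is not submultiplicative; use the ℓ∞-operator norm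
  have hopen : IsOpen {M : Matrix ι ι ℂ | spectrum ℂ M ⊆ {μ | μ.re < 0}} :=
    @spectrum.isOpen_setOf_subset ℂ (Matrix ι ι ℂ) _ _ Matrix.linftyOpNormedRing
      Matrix.linftyOpNormedAlgebra (FiniteDimensional.complete ℂ _) _
      (isOpen_lt Complex.continuous_re continuous_const)
  exact hopen.preimage (continuous_id.matrix_map Complex.continuous_ofReal)

theorem continuousOn_matrix_inv {ι K : Type*} [Fintype ι] [DecidableEq ι] [Field K]
    [TopologicalSpace K] [IsTopologicalDivisionRing K] :
    ContinuousOn (Inv.inv : Matrix ι ι K → Matrix ι ι K) {M | IsUnit M} := fun M hM =>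
  (continuousAt_matrix_inv M <| by
    rw [Ring.inverse_eq_inv']
    exact continuousAt_inv₀ ((isUnit_iff_isUnit_det M).mp hM).ne_zero).continuousWithinAt

theorem isOpen_setOf_isUnit_matrix {ι K : Type*} [Fintype ι] [DecidableEq ι] [Field K]
    [TopologicalSpace K] [IsTopologicalRing K] [T1Space K] :
    IsOpen {M : Matrix ι ι K | IsUnit M} := by
  simp only [isUnit_iff_isUnit_det, isUnit_iff_ne_zero]
  exact isOpen_ne.preimage (continuous_id.matrix_det)

theorem isOpen_setOf_isUnit_and_isHurwitz_sub_mul_inv_mul {X ι κ : Type*} [TopologicalSpace X]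
    [Fintype ι] [DecidableEq ι] [Fintype κ] [DecidableEq κ]
    (A : Matrix ι ι ℝ) (B : Matrix ι κ ℝ) {F : X → Matrix κ κ ℝ} {G : X → Matrix κ ι ℝ}
    (hF : Continuous F) (hG : Continuous G) :
    IsOpen {x | IsUnit (F x) ∧ IsHurwitz (A - B * ((F x)⁻¹ * G x))} := by
  have hinv : ContinuousOn (fun x => (F x)⁻¹) {x | IsUnit (F x)} :=
    continuousOn_matrix_inv.comp hF.continuousOn fun _ hx => hx
  have hprod : ContinuousOn (fun x => (F x)⁻¹ * G x) {x | IsUnit (F x)} :=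
    (continuous_fst.matrix_mul continuous_snd).comp_continuousOn (hinv.prodMk hG.continuousOn)
  have hcont : ContinuousOn (fun x => A - B * ((F x)⁻¹ * G x)) {x | IsUnit (F x)} :=
    (continuous_const.sub (continuous_const.matrix_mul continuous_id)).comp_continuousOn hprod
  exact hcont.isOpen_inter_preimage (isOpen_setOf_isUnit_matrix.preimage hF) isOpen_setOf_isHurwitz_s12

section Frobenius

variable {p q : Type*} [Fintype p] [Fintype q]

theorem abs_le_frobNorm (X : Matrix p q ℝ) (i : p) (j : q) : |X i j| ≤ frobNorm X := by
  rw [frobNorm, ← Real.sqrt_sq_eq_abs]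
  refine Real.sqrt_le_sqrt ?_
  calc X i j ^ 2 ≤ ∑ j', X i j' ^ 2 :=
        Finset.single_le_sum (fun j' _ => sq_nonneg (X i j')) (Finset.mem_univ j)
    _ ≤ ∑ i', ∑ j', X i' j' ^ 2 :=
        Finset.single_le_sum (f := fun i' => ∑ j', X i' j' ^ 2)
          (fun i' _ => Finset.sum_nonneg fun j' _ => sq_nonneg (X i' j')) (Finset.mem_univ i)

theorem norm_le_frobNorm (X : Matrix p q ℝ) : ‖X‖ ≤ frobNorm X :=
  (Matrix.norm_le_iff (r := frobNorm X) (Real.sqrt_nonneg _)).mpr fun i j => by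
    simpa only [Real.norm_eq_abs] using abs_le_frobNorm X i j

theorem continuous_frobNorm : Continuous (frobNorm : Matrix p q ℝ → ℝ) := by
  unfold frobNorm
  fun_prop

theorem isCompact_setOf_frobNorm_sub_le (X₀ : Matrix p q ℝ) (δ : ℝ) :
    IsCompact {X | frobNorm (X - X₀) ≤ δ} :=
  (isCompact_closedBall X₀ δ).of_isClosed_subset
    (isClosed_le (continuous_frobNorm.comp (continuous_id.sub continuous_const)) continuous_const)
    fun X hX => by
      rw [Metric.mem_closedBall, dist_eq_norm]
      exact (norm_le_frobNorm _).trans hX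

end Frobenius

theorem disturbed_policy_update_stabilizing_general
    (n m : ℕ)
    (A : Matrix (Fin n) (Fin n) ℝ) (B : Matrix (Fin n) (Fin m) ℝ)
    (R : Matrix (Fin m) (Fin m) ℝ)
    (hR : R.PosDef)
    (Pstar : Matrix (Fin n) (Fin n) ℝ)
    (δ₀ : ℝ)
    (hHurBall : ∀ P : Matrix (Fin n) (Fin n) ℝ, P.IsSymm → frobNorm (P - Pstar) ≤ δ₀ →
      IsHurwitz (A - B * R⁻¹ * Bᵀ * P)) :
    ∃ d > 0, ∀ P : Matrix (Fin n) (Fin n) ℝ, P.IsSymm → frobNorm (P - Pstar) < δ₀ →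
      ∀ ΔG : Matrix (Fin n ⊕ Fin m) (Fin n ⊕ Fin m) ℝ, ΔG.IsSymm → frobNorm ΔG < d →
        IsUnit (R + ΔG.toBlocks₂₂) ∧
        IsHurwitz (A - B * ((R + ΔG.toBlocks₂₂)⁻¹ * (Bᵀ * P + ΔG.toBlocks₂₁))) := by
  set K := {P | frobNorm (P - Pstar) ≤ δ₀} ∩ {P : Matrix (Fin n) (Fin n) ℝ | P.IsSymm}
  have hK : IsCompact K := (isCompact_setOf_frobNorm_sub_le Pstar δ₀).inter_right
    (isClosed_eq continuous_id.matrix_transpose continuous_id)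
  set U := {x : Matrix (Fin n ⊕ Fin m) (Fin n ⊕ Fin m) ℝ × Matrix (Fin n) (Fin n) ℝ |
    IsUnit (R + x.1.toBlocks₂₂) ∧
      IsHurwitz (A - B * ((R + x.1.toBlocks₂₂)⁻¹ * (Bᵀ * x.2 + x.1.toBlocks₂₁)))}
  have hU : IsOpen U := isOpen_setOf_isUnit_and_isHurwitz_sub_mul_inv_mul A B
    (continuous_const.add (continuous_fst.matrix_submatrix Sum.inr Sum.inr))
    ((continuous_const.matrix_mul continuous_snd).add
      (continuous_fst.matrix_submatrix Sum.inr Sum.inl))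
  have hzero : (0 : Matrix (Fin n ⊕ Fin m) (Fin n ⊕ Fin m) ℝ).toBlocks₂₂ = 0 ∧
      (0 : Matrix (Fin n ⊕ Fin m) (Fin n ⊕ Fin m) ℝ).toBlocks₂₁ = 0 := ⟨rfl, rfl⟩
  have hKU : ∀ P ∈ K, ((0, P) : _ × _) ∈ U := fun P hP =>
    ⟨by simpa [hzero] using hR.isUnit,
      by simpa [hzero, Matrix.mul_assoc] using hHurBall P hP.2 hP.1⟩
  have hev : ∀ᶠ ΔG in 𝓝 0, ∀ P ∈ K, (ΔG, P) ∈ U :=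
    hK.eventually_forall_of_forall_eventually fun P hP => hU.mem_nhds (hKU P hP)
  obtain ⟨d, hd, hball⟩ := Metric.eventually_nhds_iff.mp hev
  refine ⟨d, hd, fun P hPs hP ΔG _ hΔG => hball ?_ P ⟨hP.le, hPs⟩⟩
  simpa using (norm_le_frobNorm ΔG).trans_lt hΔG

/-- for `P` near `P*`, a small symmetric disturbance `ΔG` keeps the
updated gain well defined and stabilizing. -/
theorem disturbed_policy_update_stabilizing
    (n m : ℕ) (hn : 0 < n) (hm : 0 < m)
    (A : Matrix (Fin n) (Fin n) ℝ) (B : Matrix (Fin n) (Fin m) ℝ)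
    (Q : Matrix (Fin n) (Fin n) ℝ) (R : Matrix (Fin m) (Fin m) ℝ)
    (hQ : Q.PosSemidef) (hR : R.PosDef)
    (Pstar : Matrix (Fin n) (Fin n) ℝ) (hPstar : Pstar.PosDef)
    (hARE : Aᵀ * Pstar + Pstar * A - Pstar * B * R⁻¹ * Bᵀ * Pstar + Q = 0)
    (hAstar : IsHurwitz (A - B * R⁻¹ * Bᵀ * Pstar))
    (δ₀ : ℝ) (hδ₀ : 0 < δ₀)
    (hHurBall : ∀ P : Matrix (Fin n) (Fin n) ℝ, P.IsSymm → frobNorm (P - Pstar) ≤ δ₀ →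
      IsHurwitz (A - B * R⁻¹ * Bᵀ * P)) :
    ∃ d > 0, ∀ P : Matrix (Fin n) (Fin n) ℝ, P.IsSymm → frobNorm (P - Pstar) < δ₀ →
      ∀ ΔG : Matrix (Fin n ⊕ Fin m) (Fin n ⊕ Fin m) ℝ, ΔG.IsSymm → frobNorm ΔG < d →
        IsUnit (R + ΔG.toBlocks₂₂) ∧
        IsHurwitz (A - B * ((R + ΔG.toBlocks₂₂)⁻¹ * (Bᵀ * P + ΔG.toBlocks₂₁))) :=
  disturbed_policy_update_stabilizing_general n m A B R hR Pstar δ₀ hHurBall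
end
end
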